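/- Let R = ℝ[x,y], let m = ⟨x,y⟩, and let ℓ_1,...,ℓ_t be pairwise non-proportional linear forms in R with t ≥ 2. If s ≥ r + ⌊r/(t-1)⌋, then m^{s+1} = Σ_{j=1}^{t} (⟨ℓ_j^{r+1}⟩ ∩ m^{s+1}); equivalently, m^{s+1} ⊆ ⟨ℓ_1^{r+1},...,ℓ_t^{r+1}⟩. -/

import Mathlib

open MvPolynomial

open Pointwise

noncomputable section

/-- `R = ℝ[x,y]`. -/
abbrev R2 := MvPolynomial (Fin 2) ℝ

def eff (n i : ℕ) : Fin 2 →₀ ℕ := Finsupp.single 0 i + Finsupp.single 1 (n - i)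

@[simp] lemma eff_zero (n i : ℕ) : eff n i 0 = i := by
  simp [eff, Finsupp.single_apply]

@[simp] lemma eff_one (n i : ℕ) : eff n i 1 = n - i := by
  simp [eff, Finsupp.single_apply]

lemma degree_fin2 (d : Fin 2 →₀ ℕ) : d.degree = d 0 + d 1 := by
  rw [Finsupp.degree_apply, Finset.sum_subset (Finset.subset_univ d.support)]
  · exact Fin.sum_univ_two d
  · intro x _ hx
    simpa using Finsupp.notMem_support_iff.mp hx

lemma degree_eff {n i : ℕ} (h : i ≤ n) : (eff n i).degree = n := by
  rw [degree_fin2, eff_zero, eff_one]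
  omega

lemma eff_inj {n i j : ℕ} (h : eff n i = eff n j) : i = j := by
  have := congrArg (fun f => f 0) h
  simpa using this

def mk (n : ℕ) (h : ℕ → ℝ) : R2 := ∑ i ∈ Finset.range (n + 1), monomial (eff n i) (h i)

lemma coeff_mk (n : ℕ) (h : ℕ → ℝ) {i : ℕ} (hi : i ≤ n) :
    coeff (eff n i) (mk n h) = h i := by
  unfold mk
  rw [coeff_sum]
  rw [Finset.sum_eq_single i]
  · simp [coeff_monomial]
  · intro j _ hj
    rw [coeff_monomial, if_neg (fun hc => hj (eff_inj hc))]
  · intro hi'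
    exact absurd (Finset.mem_range.mpr (Nat.lt_succ_of_le hi)) hi'

lemma monomial_eff (n i : ℕ) (c : ℝ) :
    monomial (eff n i) c = C c * X 0 ^ i * X 1 ^ (n - i) := by
  rw [mul_assoc, X_pow_eq_monomial, X_pow_eq_monomial, monomial_mul, C_mul_monomial]
  simp [eff]

lemma homog_expand {n : ℕ} {P : R2} (hP : P.IsHomogeneous n) :
    P = mk n fun i => coeff (eff n i) P := by
  apply MvPolynomial.ext
  intro m
  rw [mk, coeff_sum]
  by_cases hc : coeff m P = 0
  · rw [hc, Finset.sum_eq_zero]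
    intro j _
    rw [coeff_monomial]
    split
    · next hj => rw [hj]; exact hc
    · rfl
  · have hdeg : m.degree = n := by
      by_contra hne
      exact hc (hP.coeff_eq_zero hne)
    have hm0 : m 0 ≤ n := by
      rw [← hdeg]; exact Finsupp.le_degree 0 m
    have hsum : m 0 + m 1 = n := by rw [← degree_fin2, hdeg]
    have hme : m = eff n (m 0) := by
      have h2 : ∀ k : Fin 2, k = 0 ∨ k = 1 := by decide
      ext a
      rcases h2 a with rfl | rfl
      · simp
      · simp only [eff_one]; omega
    rw [Finset.sum_eq_single (m 0)]
    · rw [coeff_monomial, if_pos hme.symm]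
      exact congrArg (fun u => coeff u P) hme
    · intro j _ hj
      rw [coeff_monomial, if_neg]
      intro hc'
      exact hj (eff_inj (hc'.trans hme))
    · intro hc'
      exact absurd (Finset.mem_range.mpr (Nat.lt_succ_of_le hm0)) hc'

lemma mk_isHomogeneous (n : ℕ) (h : ℕ → ℝ) : (mk n h).IsHomogeneous n := by
  apply MvPolynomial.IsHomogeneous.sum
  intro i hi
  exact isHomogeneous_monomial _ (degree_eff (Nat.lt_succ_iff.mp (Finset.mem_range.mp hi)))

lemma fin2cases : ∀ k : Fin 2, k = 0 ∨ k = 1 := by decide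

def LF (p q : ℝ) : R2 := C p * X 0 + C q * X 1

def dwf (a b : ℝ) (p : R2) : R2 := a • pderiv (0 : Fin 2) p + b • pderiv (1 : Fin 2) p

lemma coeff_pderiv (j : Fin 2) (m : Fin 2 →₀ ℕ) (p : R2) :
    coeff m (pderiv j p) = ((m j : ℝ) + 1) * coeff (m + Finsupp.single j 1) p := by
  induction p using MvPolynomial.induction_on' with
  | add p q hp hq =>
    rw [map_add, coeff_add, coeff_add, hp, hq]; ring
  | monomial s c =>
    rw [pderiv_monomial, coeff_monomial, coeff_monomial]
    by_cases hs : s = m + Finsupp.single j 1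
    · subst hs
      rw [if_pos (add_tsub_cancel_right ..), if_pos rfl]
      rw [Finsupp.add_apply, Finsupp.single_eq_same]
      push_cast
      ring
    · rw [if_neg hs, mul_zero]
      by_cases hj : s j = 0
      · split
        · simp [hj]
        · rfl
      · rw [if_neg]
        intro hsub
        apply hs
        ext a
        have happ : s a - (Finsupp.single j 1) a = m a := by
          rw [← Finsupp.tsub_apply, hsub]
        rw [Finsupp.add_apply]
        by_cases haj : j = a
        · subst haj
          rw [Finsupp.single_eq_same] at happ ⊢
          omega
        · rw [Finsupp.single_eq_of_ne (Ne.symm haj)] at happ ⊢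
          omega

lemma coeff_dwf (a b : ℝ) (m : Fin 2 →₀ ℕ) (p : R2) :
    coeff m (dwf a b p) =
      a * (((m 0 : ℝ) + 1) * coeff (m + Finsupp.single 0 1) p)
        + b * (((m 1 : ℝ) + 1) * coeff (m + Finsupp.single 1 1) p) := by
  rw [dwf, coeff_add, coeff_smul, coeff_smul, coeff_pderiv, coeff_pderiv]
  simp [smul_eq_mul]

lemma eff_add_single0 (n k : ℕ) : eff n k + Finsupp.single 0 1 = eff (n + 1) (k + 1) := by
  ext a
  rcases fin2cases a with rfl | rfl <;>
    simp [Finsupp.add_apply, Finsupp.single_apply] <;> omega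

lemma eff_add_single1 (n k : ℕ) (h : k ≤ n) : eff n k + Finsupp.single 1 1 = eff (n + 1) k := by
  ext a
  rcases fin2cases a with rfl | rfl <;>
    simp [Finsupp.add_apply, Finsupp.single_apply] <;> omega

lemma coeff_eff_X0_mul (n i : ℕ) (Q : R2) :
    coeff (eff (n + 1) i) (X 0 * Q) = if i = 0 then 0 else coeff (eff n (i - 1)) Q := by
  classical
  rw [coeff_X_mul']
  by_cases hi : i = 0
  · subst hi
    rw [if_neg, if_pos rfl]
    simp [Finsupp.mem_support_iff]
  · rw [if_pos, if_neg hi]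
    · congr 1
      ext a
      rcases fin2cases a with rfl | rfl
      · simp [Finsupp.tsub_apply, Finsupp.single_apply]
      · simp [Finsupp.tsub_apply, Finsupp.single_apply]
        omega
    · simp [Finsupp.mem_support_iff]
      omega

lemma coeff_eff_X1_mul (n i : ℕ) (hin : i ≤ n + 1) (Q : R2) :
    coeff (eff (n + 1) i) (X 1 * Q) = if i = n + 1 then 0 else coeff (eff n i) Q := by
  classical
  rw [coeff_X_mul']
  by_cases hi : i = n + 1
  · subst hi
    rw [if_neg, if_pos rfl]
    simp [Finsupp.mem_support_iff]
  · rw [if_pos, if_neg hi]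
    · congr 1
      ext a
      rcases fin2cases a with rfl | rfl
      · simp [Finsupp.tsub_apply, Finsupp.single_apply]
      · simp [Finsupp.tsub_apply, Finsupp.single_apply]
        omega
    · simp [Finsupp.mem_support_iff]
      omega

def apg (n : ℕ) (H P : R2) : ℝ :=
  ∑ i ∈ Finset.range (n + 1),
    coeff (eff n i) H * coeff (eff n i) P * ((i.factorial * (n - i).factorial : ℕ) : ℝ)

lemma AP2 (N : ℕ) (a b : ℝ) (H Q : R2) :
    apg (N + 1) H (LF a b * Q) = apg N (dwf a b H) Q := by
  have hw : LF a b * Q = C a * (X 0 * Q) + C b * (X 1 * Q) := by rw [LF]; ring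
  rw [hw]
  unfold apg
  have step1 : ∀ i ∈ Finset.range (N + 2),
      coeff (eff (N + 1) i) H * coeff (eff (N + 1) i) (C a * (X 0 * Q) + C b * (X 1 * Q)) *
          ((i.factorial * (N + 1 - i).factorial : ℕ) : ℝ)
        = (a * (coeff (eff (N + 1) i) H * (if i = 0 then 0 else coeff (eff N (i - 1)) Q) *
            ((i.factorial * (N + 1 - i).factorial : ℕ) : ℝ)))
          + (b * (coeff (eff (N + 1) i) H * (if i = N + 1 then 0 else coeff (eff N i) Q) *
            ((i.factorial * (N + 1 - i).factorial : ℕ) : ℝ))) := by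
    intro i hi
    rw [coeff_add, coeff_C_mul, coeff_C_mul, coeff_eff_X0_mul,
      coeff_eff_X1_mul _ _ (by have := Finset.mem_range.mp hi; omega : i ≤ N + 1)]
    ring
  rw [Finset.sum_congr rfl step1, Finset.sum_add_distrib]
  have hA : (∑ i ∈ Finset.range (N + 2),
      (a * (coeff (eff (N + 1) i) H * (if i = 0 then 0 else coeff (eff N (i - 1)) Q) *
        ((i.factorial * (N + 1 - i).factorial : ℕ) : ℝ))))
      = ∑ k ∈ Finset.range (N + 1),
        (a * (((k : ℝ) + 1) * coeff (eff N k + Finsupp.single 0 1) H)) * coeff (eff N k) Q *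
          ((k.factorial * (N - k).factorial : ℕ) : ℝ) := by
    rw [Finset.sum_range_succ']
    have hz : (a * (coeff (eff (N + 1) 0) H * (if (0 : ℕ) = 0 then (0:ℝ) else coeff (eff N (0 - 1)) Q) *
        ((Nat.factorial 0 * (N + 1 - 0).factorial : ℕ) : ℝ))) = 0 := by simp
    rw [hz, add_zero]
    apply Finset.sum_congr rfl
    intro k _
    rw [if_neg (Nat.succ_ne_zero k), eff_add_single0]
    rw [Nat.add_sub_cancel, Nat.succ_sub_succ_eq_sub, Nat.factorial_succ]
    push_cast
    ring
  have hB : (∑ i ∈ Finset.range (N + 2),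
      (b * (coeff (eff (N + 1) i) H * (if i = N + 1 then 0 else coeff (eff N i) Q) *
        ((i.factorial * (N + 1 - i).factorial : ℕ) : ℝ))))
      = ∑ k ∈ Finset.range (N + 1),
        (b * (((N - k : ℕ) + 1 : ℝ) * coeff (eff N k + Finsupp.single 1 1) H)) * coeff (eff N k) Q *
          ((k.factorial * (N - k).factorial : ℕ) : ℝ) := by
    rw [Finset.sum_range_succ]
    have hz : (b * (coeff (eff (N + 1) (N + 1)) H * (if (N + 1 : ℕ) = N + 1 then (0:ℝ) else coeff (eff N (N+1)) Q) *
        (((N+1).factorial * (N + 1 - (N+1)).factorial : ℕ) : ℝ))) = 0 := by simp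
    rw [hz, add_zero]
    apply Finset.sum_congr rfl
    intro k hk
    have hkN : k ≤ N := by have := Finset.mem_range.mp hk; omega
    rw [if_neg (by omega : ¬ k = N + 1)]
    rw [eff_add_single1 _ _ hkN]
    have h2 : N + 1 - k = (N - k) + 1 := by omega
    rw [h2, Nat.factorial_succ]
    push_cast
    ring
  rw [hA, hB, ← Finset.sum_add_distrib]
  apply Finset.sum_congr rfl
  intro k hk
  have hkN : k ≤ N := by have := Finset.mem_range.mp hk; omega
  rw [coeff_dwf]
  have e0 : ((eff N k) 0 : ℝ) = k := by rw [eff_zero]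
  have e1 : ((eff N k) 1 : ℝ) = ((N - k : ℕ) : ℝ) := by rw [eff_one]
  rw [e0, e1]
  ring

lemma dwf_mul (a b : ℝ) (p q : R2) :
    dwf a b (p * q) = p * dwf a b q + q * dwf a b p := by
  simp only [dwf, pderiv_mul, smul_add, smul_eq_C_mul]
  ring

lemma dwf_pow (a b : ℝ) (p : R2) (n : ℕ) :
    dwf a b (p ^ n) = (n : R2) * p ^ (n - 1) * dwf a b p := by
  simp only [dwf, pderiv_pow, smul_eq_C_mul]
  ring

lemma dwf_LF (a b p q : ℝ) : dwf a b (LF p q) = C (a * p + b * q) := by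
  have h0 : pderiv (0 : Fin 2) (LF p q) = C p := by
    simp [LF, pderiv_C_mul]
  have h1 : pderiv (1 : Fin 2) (LF p q) = C q := by
    simp [LF, pderiv_C_mul]
  rw [dwf, h0, h1, smul_eq_C_mul, smul_eq_C_mul, ← C_mul, ← C_mul, ← C_add]

lemma du_mono (a b : ℝ) (f m : ℕ) :
    dwf a b ((LF a b) ^ f * (LF b (-a)) ^ m)
      = C ((f : ℝ) * (a * a + b * b)) * ((LF a b) ^ (f - 1) * (LF b (-a)) ^ m) := by
  rw [dwf_mul, dwf_pow, dwf_pow, dwf_LF, dwf_LF]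
  have h1 : a * b + b * (-a) = 0 := by ring
  rw [h1, C_0, mul_zero, mul_zero, zero_add]
  rw [show ((f : R2)) = C ((f : ℕ) : ℝ) by push_cast; rfl]
  rw [C_mul]
  ring

lemma dv_mono (a b : ℝ) (f m : ℕ) :
    dwf b (-a) ((LF a b) ^ f * (LF b (-a)) ^ m)
      = C ((m : ℝ) * (a * a + b * b)) * ((LF a b) ^ f * (LF b (-a)) ^ (m - 1)) := by
  rw [dwf_mul, dwf_pow, dwf_pow, dwf_LF, dwf_LF]
  have h1 : b * a + -a * b = 0 := by ring
  have h2 : b * b + -a * -a = a * a + b * b := by ring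
  rw [h1, C_0, mul_zero, mul_zero, add_zero, h2]
  rw [show ((m : R2)) = C ((m : ℕ) : ℝ) by push_cast; rfl]
  rw [C_mul]
  ring

lemma apg_C_mul (n : ℕ) (c : ℝ) (H P : R2) : apg n (C c * H) P = c * apg n H P := by
  unfold apg
  rw [Finset.mul_sum]
  apply Finset.sum_congr rfl
  intro i _
  rw [coeff_C_mul]
  ring

lemma apg_zero (n : ℕ) (P : R2) : apg n 0 P = 0 := by
  unfold apg
  apply Finset.sum_eq_zero
  intro i _
  simp

lemma coreV (a b : ℝ) : ∀ mv f m : ℕ, f + m = mv →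
    apg mv ((LF a b) ^ f * (LF b (-a)) ^ m) ((LF b (-a)) ^ mv)
      = if f = 0 then ((a * a + b * b) ^ mv * (mv.factorial : ℝ)) else 0 := by
  intro mv
  induction mv with
  | zero =>
    intro f m h
    obtain ⟨rfl, rfl⟩ : f = 0 ∧ m = 0 := by omega
    have heff : eff 0 0 = 0 := by
      ext a'; rcases fin2cases a' with rfl | rfl <;> simp
    simp [apg, heff]
  | succ n ih =>
    intro f m h
    rw [pow_succ' (LF b (-a)) n]
    have hidx : n + 1 = n + 1 := rfl
    rw [AP2 n b (-a) _ _]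
    rw [dv_mono, apg_C_mul]
    by_cases hm : m = 0
    · subst hm
      rw [show ((0:ℕ):ℝ) * (a * a + b * b) = 0 by simp, zero_mul,
        if_neg (by omega : ¬ f = 0)]
    · have ihh := ih f (m - 1) (by omega)
      rw [ihh]
      by_cases hf : f = 0
      · subst hf
        rw [if_pos rfl, if_pos rfl]
        have hmn : m = n + 1 := by omega
        subst hmn
        rw [pow_succ, Nat.factorial_succ]
        push_cast
        ring
      · rw [if_neg hf, if_neg hf, mul_zero]

lemma coreU (a b : ℝ) : ∀ e nv f m : ℕ, f + m = e + nv →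
    apg (e + nv) ((LF a b) ^ f * (LF b (-a)) ^ m) ((LF a b) ^ e * (LF b (-a)) ^ nv)
      = if f = e then ((a * a + b * b) ^ (e + nv) * ((e.factorial * nv.factorial : ℕ) : ℝ)) else 0 := by
  intro e
  induction e with
  | zero =>
    intro nv f m h
    rw [pow_zero, one_mul, zero_add]
    rw [coreV a b nv f m (by omega)]
    simp
  | succ e ih =>
    intro nv f m h
    have hP : (LF a b) ^ (e + 1) * (LF b (-a)) ^ nv = LF a b * ((LF a b) ^ e * (LF b (-a)) ^ nv) := by
      rw [pow_succ']; ring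
    have hidx : e + 1 + nv = (e + nv) + 1 := by omega
    rw [hP, hidx, AP2 (e + nv) a b _ _]
    rw [du_mono, apg_C_mul]
    by_cases hf : f = 0
    · subst hf
      rw [show ((0:ℕ):ℝ) * (a * a + b * b) = 0 by simp, zero_mul,
        if_neg (by omega : ¬ (0:ℕ) = e + 1)]
    · have ihh := ih nv (f - 1) m (by omega)
      rw [ihh]
      by_cases hfe : f = e + 1
      · subst hfe
        rw [if_pos (by omega), if_pos rfl]
        rw [pow_succ, Nat.factorial_succ]
        push_cast
        ring
      · rw [if_neg (by omega), if_neg hfe, mul_zero]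

lemma LF_isHomogeneous (p q : ℝ) : (LF p q).IsHomogeneous 1 := by
  rw [LF]
  exact (isHomogeneous_C_mul_X p 0).add (isHomogeneous_C_mul_X q 1)

def sg (a b : ℝ) : R2 →ₐ[ℝ] R2 := aeval ![LF a b, LF b (-a)]

def tg (a b : ℝ) : R2 →ₐ[ℝ] R2 :=
  aeval ![LF (a / (a * a + b * b)) (b / (a * a + b * b)),
          LF (b / (a * a + b * b)) (-a / (a * a + b * b))]

lemma aeval_LF (g : Fin 2 → R2) (p q : ℝ) :
    aeval g (LF p q) = C p * g 0 + C q * g 1 := by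
  simp [LF, algebraMap_eq]

lemma sg_X0 (a b : ℝ) : sg a b (X 0) = LF a b := by simp [sg]

lemma sg_X1 (a b : ℝ) : sg a b (X 1) = LF b (-a) := by simp [sg]

lemma sg_tg_X (a b : ℝ) (hρ : a * a + b * b ≠ 0) (i : Fin 2) :
    sg a b (tg a b (X i)) = X i := by
  set ρ := a * a + b * b with hρdef
  fin_cases i
  · show sg a b (tg a b (X 0)) = X 0
    rw [tg]
    rw [aeval_X]
    rw [show (![LF (a / ρ) (b / ρ), LF (b / ρ) (-a / ρ)] 0) = LF (a / ρ) (b / ρ) from rfl]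
    rw [sg, aeval_LF]
    rw [show (![LF a b, LF b (-a)] 0) = LF a b from rfl,
        show (![LF a b, LF b (-a)] 1) = LF b (-a) from rfl]
    have step : C (a / ρ) * LF a b + C (b / ρ) * LF b (-a)
        = C (a / ρ * a + b / ρ * b) * X 0 + C (a / ρ * b + b / ρ * (-a)) * X 1 := by
      simp only [C_add, C_mul, LF]
      ring
    rw [step]
    rw [show a / ρ * a + b / ρ * b = 1 by field_simp; try ring,
        show a / ρ * b + b / ρ * (-a) = 0 by field_simp; try ring]
    simp
  · show sg a b (tg a b (X 1)) = X 1
    rw [tg]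
    rw [aeval_X]
    rw [show (![LF (a / ρ) (b / ρ), LF (b / ρ) (-a / ρ)] 1) = LF (b / ρ) (-a / ρ) from rfl]
    rw [sg, aeval_LF]
    rw [show (![LF a b, LF b (-a)] 0) = LF a b from rfl,
        show (![LF a b, LF b (-a)] 1) = LF b (-a) from rfl]
    have step : C (b / ρ) * LF a b + C (-a / ρ) * LF b (-a)
        = C (b / ρ * a + -a / ρ * b) * X 0 + C (b / ρ * b + -a / ρ * (-a)) * X 1 := by
      simp only [C_add, C_mul, LF]
      ring
    rw [step]
    rw [show b / ρ * a + -a / ρ * b = 0 by field_simp; try ring,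
        show b / ρ * b + -a / ρ * (-a) = 1 by field_simp; ring]
    simp

lemma sg_tg_id (a b : ℝ) (hρ : a * a + b * b ≠ 0) (p : R2) :
    sg a b (tg a b p) = p := by
  induction p using MvPolynomial.induction_on with
  | C r => simp [sg, tg]
  | add p q hp hq => rw [map_add, map_add, hp, hq]
  | mul_X p i hp => rw [map_mul, map_mul, hp, sg_tg_X a b hρ]

lemma exp_uv (a b : ℝ) (hρ : a * a + b * b ≠ 0) (d : ℕ) (F : R2) (hF : F.IsHomogeneous d) :
    ∃ δ : ℕ → ℝ, F = ∑ f ∈ Finset.range (d + 1),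
      C (δ f) * ((LF a b) ^ f * (LF b (-a)) ^ (d - f)) := by
  have hg : ∀ i : Fin 2, ((![LF (a / (a * a + b * b)) (b / (a * a + b * b)),
      LF (b / (a * a + b * b)) (-a / (a * a + b * b))] : Fin 2 → R2) i).IsHomogeneous 1 := by
    intro i
    fin_cases i
    · exact LF_isHomogeneous _ _
    · exact LF_isHomogeneous _ _
  have hH : (tg a b F).IsHomogeneous d := by
    have := hF.aeval (R := ℝ) _ hg
    rwa [one_mul] at this
  refine ⟨fun f => coeff (eff d f) (tg a b F), ?_⟩
  conv_lhs => rw [← sg_tg_id a b hρ F, homog_expand hH]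
  rw [mk, map_sum]
  apply Finset.sum_congr rfl
  intro f _
  rw [monomial_eff, map_mul, map_mul, map_pow, map_pow, sg_X0, sg_X1]
  rw [show (sg a b) (C (coeff (eff d f) (tg a b F))) = C (coeff (eff d f) (tg a b F)) by
    rw [sg]; rw [aeval_C, algebraMap_eq]]
  ring

lemma coreU' (a b : ℝ) (d e f : ℕ) (he : e ≤ d) (hf : f ≤ d) :
    apg d ((LF a b) ^ f * (LF b (-a)) ^ (d - f)) ((LF a b) ^ e * (LF b (-a)) ^ (d - e))
      = if f = e then ((a * a + b * b) ^ d * ((e.factorial * (d - e).factorial : ℕ) : ℝ))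
        else 0 := by
  have h := coreU a b e (d - e) f (d - f) (by omega)
  rw [show e + (d - e) = d from by omega] at h
  exact h

lemma apg_sum_left {ι : Type*} (s : Finset ι) (n : ℕ) (H : ι → R2) (P : R2) :
    apg n (∑ i ∈ s, H i) P = ∑ i ∈ s, apg n (H i) P := by
  unfold apg
  rw [Finset.sum_comm]
  apply Finset.sum_congr rfl
  intro i _
  rw [coeff_sum, Finset.sum_mul, Finset.sum_mul]

lemma span_crit {M : Type*} [AddCommGroup M] [Module ℝ M] (S : Set M) (x : M)
    (h : ∀ lam : M →ₗ[ℝ] ℝ, (∀ p ∈ S, lam p = 0) → lam x = 0) :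
    x ∈ Submodule.span ℝ S := by
  by_contra hx
  set W := Submodule.span ℝ S with hW
  have hxq : W.mkQ x ≠ 0 := by
    rw [Submodule.mkQ_apply, ne_eq, Submodule.Quotient.mk_eq_zero]
    exact hx
  obtain ⟨f, hf⟩ : ∃ f : Module.Dual ℝ (M ⧸ W), f (W.mkQ x) ≠ 0 := by
    by_contra hall
    push_neg at hall
    exact hxq ((Module.forall_dual_apply_eq_zero_iff ℝ (W.mkQ x)).mp hall)
  apply hf
  have := h (f.comp W.mkQ) ?_
  · exact this
  · intro p hp
    have hp0 : W.mkQ p = 0 := by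
      rw [Submodule.mkQ_apply, Submodule.Quotient.mk_eq_zero]
      exact Submodule.subset_span hp
    simp [LinearMap.comp_apply, hp0]

def ph : R2 →ₐ[ℝ] Polynomial ℝ := aeval ![Polynomial.X, 1]

lemma ph_mk (n : ℕ) (h : ℕ → ℝ) :
    ph (mk n h) = ∑ i ∈ Finset.range (n + 1), Polynomial.C (h i) * Polynomial.X ^ i := by
  rw [mk, map_sum]
  apply Finset.sum_congr rfl
  intro i _
  rw [monomial_eff, map_mul, map_mul, map_pow, map_pow]
  rw [show ph (X 0) = Polynomial.X from by simp [ph]]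
  rw [show ph (X 1) = 1 from by simp [ph]]
  rw [show ph (C (h i)) = Polynomial.C (h i) from by
    rw [ph]; rw [aeval_C]; rfl]
  simp

lemma ph_LF (p q : ℝ) : ph (LF p q) = Polynomial.C p * Polynomial.X + Polynomial.C q := by
  rw [LF, map_add, map_mul, map_mul]
  rw [show ph (X 0) = Polynomial.X from by simp [ph]]
  rw [show ph (X 1) = 1 from by simp [ph]]
  rw [show ph (C p) = Polynomial.C p from by rw [ph]; rw [aeval_C]; rfl]
  rw [show ph (C q) = Polynomial.C q from by rw [ph]; rw [aeval_C]; rfl]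
  ring

lemma core_span (t d r : ℕ) (a b : Fin t → ℝ) (hb : ∀ j, b j ≠ 0)
    (hdet : ∀ i j, i ≠ j → a i * b j - a j * b i ≠ 0)
    (hd : d + 1 ≤ t * (d - r)) (α β : ℕ) (hαβ : α + β = d) :
    (X 0 ^ α * X 1 ^ β : R2) ∈ Submodule.span ℝ
      {P : R2 | ∃ (j : Fin t) (k : ℕ), k ≤ d - (r + 1) ∧
        P = LF (a j) (b j) ^ (r + 1) * (X 0 ^ k * X 1 ^ (d - (r + 1) - k))} := by
  have hrd : r + 1 ≤ d := by
    rcases Nat.lt_or_ge r d with h | h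
    · omega
    · have h0 : d - r = 0 := by omega
      rw [h0, Nat.mul_zero] at hd
      omega
  apply span_crit
  intro lam hlam
  set g : ℕ → ℝ := fun i => lam (X 0 ^ i * X 1 ^ (d - i)) with hgdef
  -- the vanishing conditions
  have hcond : ∀ (j : Fin t) (e : ℕ), r + 1 ≤ e → e ≤ d →
      lam (LF (a j) (b j) ^ e * LF (b j) (-(a j)) ^ (d - e)) = 0 := by
    intro j e hre hed
    have hQhom : ((LF (a j) (b j)) ^ (e - (r + 1)) * (LF (b j) (-(a j))) ^ (d - e)).IsHomogeneous
        (d - (r + 1)) := by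
      have h1 := ((LF_isHomogeneous (a j) (b j)).pow (e - (r + 1))).mul
        ((LF_isHomogeneous (b j) (-(a j))).pow (d - e))
      rw [show 1 * (e - (r + 1)) + 1 * (d - e) = d - (r + 1) from by omega] at h1
      exact h1
    have hsplit : LF (a j) (b j) ^ e * LF (b j) (-(a j)) ^ (d - e)
        = LF (a j) (b j) ^ (r + 1)
          * ((LF (a j) (b j)) ^ (e - (r + 1)) * (LF (b j) (-(a j))) ^ (d - e)) := by
      rw [← mul_assoc, ← pow_add, show r + 1 + (e - (r + 1)) = e from by omega]
    rw [hsplit, homog_expand hQhom, mk, Finset.mul_sum, map_sum]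
    apply Finset.sum_eq_zero
    intro k hk
    have hk' : k ≤ d - (r + 1) := by have := Finset.mem_range.mp hk; omega
    rw [monomial_eff]
    rw [show LF (a j) (b j) ^ (r + 1)
          * (C (coeff (eff (d - (r + 1)) k)
              ((LF (a j) (b j)) ^ (e - (r + 1)) * (LF (b j) (-(a j))) ^ (d - e)))
            * X 0 ^ k * X 1 ^ (d - (r + 1) - k))
        = (coeff (eff (d - (r + 1)) k)
              ((LF (a j) (b j)) ^ (e - (r + 1)) * (LF (b j) (-(a j))) ^ (d - e)))
            • (LF (a j) (b j) ^ (r + 1) * (X 0 ^ k * X 1 ^ (d - (r + 1) - k))) from by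
      rw [smul_eq_C_mul]; ring]
    rw [map_smul, hlam _ ⟨j, k, hk', rfl⟩, smul_zero]
  -- the dual polynomial
  set γ : ℕ → ℝ := fun i => g i / ((i.factorial * (d - i).factorial : ℕ) : ℝ) with hγdef
  set F : R2 := mk d γ with hFdef
  have hFhom : F.IsHomogeneous d := mk_isHomogeneous d γ
  have AP1 : ∀ p : ℕ → ℝ, lam (mk d p) = apg d F (mk d p) := by
    intro p
    have e1 : lam (mk d p) = ∑ i ∈ Finset.range (d + 1), p i * g i := by
      rw [mk, map_sum]
      apply Finset.sum_congr rfl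
      intro i _
      rw [monomial_eff]
      rw [show (C (p i) * X 0 ^ i * X 1 ^ (d - i) : R2) = (p i) • (X 0 ^ i * X 1 ^ (d - i)) from by
        rw [smul_eq_C_mul]; ring]
      rw [map_smul]
      all_goals rw [smul_eq_mul]
      all_goals rfl
    have e2 : apg d F (mk d p) = ∑ i ∈ Finset.range (d + 1), p i * g i := by
      unfold apg
      apply Finset.sum_congr rfl
      intro i hi
      have hid : i ≤ d := by have := Finset.mem_range.mp hi; omega
      rw [coeff_mk d γ hid, coeff_mk d p hid]
      have hwt : ((i.factorial * (d - i).factorial : ℕ) : ℝ) ≠ 0 := by positivity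
      have hγg : γ i * ((i.factorial * (d - i).factorial : ℕ) : ℝ) = g i := by
        rw [hγdef]
        field_simp
      calc γ i * p i * ((i.factorial * (d - i).factorial : ℕ) : ℝ)
          = p i * (γ i * ((i.factorial * (d - i).factorial : ℕ) : ℝ)) := by ring
        _ = p i * g i := by rw [hγg]
    rw [e1, e2]
  -- divisibility for each j
  have hdvd : ∀ j : Fin t, (LF (b j) (-(a j))) ^ (d - r) ∣ F := by
    intro j
    have hρj : a j * a j + b j * b j ≠ 0 := by
      have h1 : 0 < b j * b j := mul_self_pos.mpr (hb j)
      nlinarith [mul_self_nonneg (a j)]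
    obtain ⟨δ, hδ⟩ := exp_uv (a j) (b j) hρj d F hFhom
    have hδe : ∀ e, r + 1 ≤ e → e ≤ d → δ e = 0 := by
      intro e hre hed
      have hPhom : ((LF (a j) (b j)) ^ e * (LF (b j) (-(a j))) ^ (d - e)).IsHomogeneous d := by
        have h1 := ((LF_isHomogeneous (a j) (b j)).pow e).mul
          ((LF_isHomogeneous (b j) (-(a j))).pow (d - e))
        rw [show 1 * e + 1 * (d - e) = d from by omega] at h1
        exact h1
      have h1 : apg d F ((LF (a j) (b j)) ^ e * (LF (b j) (-(a j))) ^ (d - e)) = 0 := by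
        calc apg d F ((LF (a j) (b j)) ^ e * (LF (b j) (-(a j))) ^ (d - e))
            = apg d F (mk d fun i =>
                coeff (eff d i) ((LF (a j) (b j)) ^ e * (LF (b j) (-(a j))) ^ (d - e))) := by
              rw [← homog_expand hPhom]
          _ = lam (mk d fun i =>
                coeff (eff d i) ((LF (a j) (b j)) ^ e * (LF (b j) (-(a j))) ^ (d - e))) :=
              (AP1 _).symm
          _ = lam ((LF (a j) (b j)) ^ e * (LF (b j) (-(a j))) ^ (d - e)) := by
              rw [← homog_expand hPhom]
          _ = 0 := hcond j e hre hed
      have h2 : apg d F ((LF (a j) (b j)) ^ e * (LF (b j) (-(a j))) ^ (d - e))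
          = δ e * ((a j * a j + b j * b j) ^ d
              * ((e.factorial * (d - e).factorial : ℕ) : ℝ)) := by
        conv_lhs => rw [hδ]
        rw [apg_sum_left]
        rw [Finset.sum_congr rfl (fun f hf => ?_)]
        rotate_left
        · exact fun f => δ f * (if f = e then ((a j * a j + b j * b j) ^ d
            * ((e.factorial * (d - e).factorial : ℕ) : ℝ)) else 0)
        · rw [apg_C_mul, coreU' (a j) (b j) d e f hed
            (by have := Finset.mem_range.mp hf; omega)]
        rw [Finset.sum_eq_single e]
        · rw [if_pos rfl]
        · intro f _ hfe
          rw [if_neg hfe, mul_zero]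
        · intro he'
          exact absurd (Finset.mem_range.mpr (by omega)) he'
      have hwt : ((e.factorial * (d - e).factorial : ℕ) : ℝ) ≠ 0 := by positivity
      have hρd : (a j * a j + b j * b j) ^ d ≠ 0 := pow_ne_zero _ hρj
      have := h2.symm.trans h1
      rcases mul_eq_zero.mp this with h | h
      · exact h
      · exact absurd h (by exact mul_ne_zero hρd hwt)
    rw [hδ]
    rw [← Finset.sum_subset (Finset.range_subset_range.mpr (by omega : r + 1 ≤ d + 1))
      (fun f hf hf' => ?_)]
    rotate_left
    · have h1 : r + 1 ≤ f := by
        by_contra hcon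
        exact hf' (Finset.mem_range.mpr (by omega))
      have h2 : f ≤ d := by have := Finset.mem_range.mp hf; omega
      rw [hδe f h1 h2, C_0, zero_mul]
    apply Finset.dvd_sum
    intro f hf
    have hfr : f ≤ r := by have := Finset.mem_range.mp hf; omega
    refine ⟨C (δ f) * (LF (a j) (b j)) ^ f * (LF (b j) (-(a j))) ^ (r - f), ?_⟩
    rw [show d - f = (d - r) + (r - f) from by omega, pow_add]
    ring
  -- to one variable
  have hcoeffF : ∀ i, i ≤ d → coeff (eff d i) F = γ i := fun i hi => coeff_mk d γ hi
  have hF0 : F = 0 := by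
    by_contra hF0
    have hexγ : ∃ i, i ≤ d ∧ γ i ≠ 0 := by
      by_contra hall
      push_neg at hall
      apply hF0
      rw [hFdef, mk]
      apply Finset.sum_eq_zero
      intro i hi
      rw [hall i (by have := Finset.mem_range.mp hi; omega)]
      exact monomial_zero
    obtain ⟨i0, hi0d, hi0⟩ := hexγ
    set p : Polynomial ℝ := ph F with hpdef
    have hpc : ∀ i, i ≤ d → p.coeff i = γ i := by
      intro i hi
      rw [hpdef, hFdef, ph_mk, Polynomial.finset_sum_coeff]
      rw [Finset.sum_eq_single i]
      · rw [Polynomial.coeff_C_mul, Polynomial.coeff_X_pow, if_pos rfl, mul_one]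
      · intro f _ hfi
        rw [Polynomial.coeff_C_mul, Polynomial.coeff_X_pow, if_neg (fun hc => hfi hc.symm),
          mul_zero]
      · intro hi'
        exact absurd (Finset.mem_range.mpr (by omega)) hi'
    have hp0 : p ≠ 0 := fun hp => hi0 (by rw [← hpc i0 hi0d, hp, Polynomial.coeff_zero])
    have hpdeg : p.natDegree ≤ d := by
      rw [hpdef, hFdef, ph_mk]
      apply Polynomial.natDegree_sum_le_of_forall_le
      intro i hi
      have hid : i ≤ d := by have := Finset.mem_range.mp hi; omega
      apply le_trans (Polynomial.natDegree_C_mul_le _ _)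
      rw [Polynomial.natDegree_X_pow]
      exact hid
    have hqdvd : ∀ j : Fin t, (Polynomial.X - Polynomial.C (a j / b j)) ^ (d - r) ∣ p := by
      intro j
      have h1 : (Polynomial.X - Polynomial.C (a j / b j)) ∣ ph (LF (b j) (-(a j))) := by
        refine ⟨Polynomial.C (b j), ?_⟩
        rw [ph_LF]
        rw [sub_mul, ← Polynomial.C_mul, div_mul_cancel₀ _ (hb j), Polynomial.C_neg]
        ring
      calc (Polynomial.X - Polynomial.C (a j / b j)) ^ (d - r)
          ∣ (ph (LF (b j) (-(a j)))) ^ (d - r) := pow_dvd_pow_of_dvd h1 _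
        _ = ph ((LF (b j) (-(a j))) ^ (d - r)) := (map_pow _ _ _).symm
        _ ∣ p := map_dvd _ (hdvd j)
    have hinj : Function.Injective (fun j : Fin t => a j / b j) := by
      intro i j hij
      by_contra hne
      apply hdet i j hne
      have := (div_eq_div_iff (hb i) (hb j)).mp hij
      linarith
    have hprod : (∏ j : Fin t, (Polynomial.X - Polynomial.C (a j / b j)) ^ (d - r)) ∣ p := by
      apply Finset.prod_dvd_of_coprime
      · intro i hi j hj hij
        exact ((Polynomial.pairwise_coprime_X_sub_C hinj) hij).pow
      · intro j _
        exact hqdvd j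
    have hdeg : (∏ j : Fin t, (Polynomial.X - Polynomial.C (a j / b j)) ^ (d - r)).natDegree
        = t * (d - r) := by
      rw [Polynomial.natDegree_prod]
      · rw [Finset.sum_congr rfl (fun j _ => ?_)]
        rotate_left
        · exact fun _ => d - r
        · rw [Polynomial.natDegree_pow, Polynomial.natDegree_X_sub_C, mul_one]
        rw [Finset.sum_const, Finset.card_univ, Fintype.card_fin, smul_eq_mul]
      · intro j _
        exact pow_ne_zero _ (Polynomial.X_sub_C_ne_zero _)
    have hle := Polynomial.natDegree_le_of_dvd hprod hp0
    rw [hdeg] at hle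
    omega
  -- conclude
  have hg0 : ∀ i, i ≤ d → g i = 0 := by
    intro i hi
    have h1 : γ i = 0 := by
      rw [← hcoeffF i hi, hF0]
      exact coeff_zero _
    have hwt : ((i.factorial * (d - i).factorial : ℕ) : ℝ) ≠ 0 := by positivity
    have h2 : g i = γ i * ((i.factorial * (d - i).factorial : ℕ) : ℝ) := by
      rw [hγdef]
      field_simp
    rw [h2, h1, zero_mul]
  have hβ : β = d - α := by omega
  have hαd : α ≤ d := by omega
  rw [hβ]
  exact hg0 α hαd

lemma linear_form {p : R2} (hp : p.IsHomogeneous 1) :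
    p = LF (coeff (eff 1 1) p) (coeff (eff 1 0) p) := by
  conv_lhs => rw [homog_expand hp]
  rw [mk, Finset.sum_range_succ, Finset.sum_range_one, monomial_eff, monomial_eff, LF]
  norm_num
  ring

lemma smul_LF (c p q : ℝ) : c • LF p q = LF (c * p) (c * q) := by
  rw [smul_eq_C_mul, LF, LF, C_mul, C_mul]
  ring

def sh (c : ℝ) : R2 →ₐ[ℝ] R2 := aeval ![X 0 + C c * X 1, X 1]

lemma sh_X0 (c : ℝ) : sh c (X 0) = X 0 + C c * X 1 := by simp [sh]

lemma sh_X1 (c : ℝ) : sh c (X 1) = X 1 := by simp [sh]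

lemma sh_C (c p : ℝ) : sh c (C p) = C p := by
  rw [sh, aeval_C]; rfl

lemma sh_LF (c p q : ℝ) : sh c (LF p q) = LF p (p * c + q) := by
  rw [LF, map_add, map_mul, map_mul, sh_X0, sh_X1, sh_C, sh_C, LF, C_add, C_mul]
  ring

lemma sh_sh (c : ℝ) (p : R2) : sh (-c) (sh c p) = p := by
  induction p using MvPolynomial.induction_on with
  | C r => rw [sh_C, sh_C]
  | add p q hp hq => rw [map_add, map_add, hp, hq]
  | mul_X p i hp =>
    rw [map_mul, map_mul, hp]
    congr 1
    fin_cases i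
    · show sh (-c) (sh c (X 0)) = X 0
      rw [sh_X0, map_add, map_mul, sh_X0, sh_X1, sh_C, C_neg]
      ring
    · show sh (-c) (sh c (X 1)) = X 1
      rw [sh_X1, sh_X1]

lemma sh_homog (c : ℝ) {P : R2} {n : ℕ} (hP : P.IsHomogeneous n) :
    (sh c P).IsHomogeneous n := by
  have hg : ∀ i : Fin 2, ((![X 0 + C c * X 1, X 1] : Fin 2 → R2) i).IsHomogeneous 1 := by
    intro i
    fin_cases i
    · exact (isHomogeneous_X _ _).add (isHomogeneous_C_mul_X c 1)
    · exact isHomogeneous_X _ _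
  have := hP.aeval (R := ℝ) _ hg
  rwa [one_mul] at this

lemma homog_mem_mpow {P : R2} {n : ℕ} (hP : P.IsHomogeneous n) :
    P ∈ (Ideal.span {X 0, X 1} : Ideal R2) ^ n := by
  have hX0 : (X 0 : R2) ∈ Ideal.span {X 0, X 1} :=
    Ideal.subset_span (by simp)
  have hX1 : (X 1 : R2) ∈ Ideal.span {X 0, X 1} :=
    Ideal.subset_span (by simp)
  rw [homog_expand hP, mk]
  apply Submodule.sum_mem
  intro i hi
  have hid : i ≤ n := by have := Finset.mem_range.mp hi; omega
  rw [monomial_eff, mul_assoc]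
  apply Ideal.mul_mem_left
  have h1 : (X 0 ^ i * X 1 ^ (n - i) : R2)
      ∈ (Ideal.span {X 0, X 1} : Ideal R2) ^ i * (Ideal.span {X 0, X 1} : Ideal R2) ^ (n - i) :=
    Ideal.mul_mem_mul (Ideal.pow_mem_pow hX0 i) (Ideal.pow_mem_pow hX1 (n - i))
  rwa [← pow_add, show i + (n - i) = n from by omega] at h1

lemma mpow_le (n : ℕ) : (Ideal.span {X 0, X 1} : Ideal R2) ^ n
    ≤ Ideal.span {P : R2 | ∃ i j : ℕ, i + j = n ∧ P = X 0 ^ i * X 1 ^ j} := by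
  induction n with
  | zero =>
    rw [pow_zero, Ideal.one_eq_top]
    have h1 : (1 : R2) ∈ Ideal.span {P : R2 | ∃ i j : ℕ, i + j = 0 ∧ P = X 0 ^ i * X 1 ^ j} :=
      Ideal.subset_span ⟨0, 0, rfl, by simp⟩
    exact (Ideal.eq_top_iff_one _).mpr h1 ▸ le_refl _
  | succ n ih =>
    rw [pow_succ]
    calc (Ideal.span {X 0, X 1} : Ideal R2) ^ n * Ideal.span {X 0, X 1}
        ≤ Ideal.span {P : R2 | ∃ i j : ℕ, i + j = n ∧ P = X 0 ^ i * X 1 ^ j}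
          * Ideal.span {X 0, X 1} := Ideal.mul_mono_left ih
      _ = Ideal.span ({P : R2 | ∃ i j : ℕ, i + j = n ∧ P = X 0 ^ i * X 1 ^ j}
          * {X 0, X 1}) := Ideal.span_mul_span' _ _
      _ ≤ Ideal.span {P : R2 | ∃ i j : ℕ, i + j = n + 1 ∧ P = X 0 ^ i * X 1 ^ j} := by
          apply Ideal.span_mono
          rintro x hx
          rw [Set.mem_mul] at hx
          obtain ⟨y, hy, z, hz, rfl⟩ := hx
          obtain ⟨i, j, hij, rfl⟩ := hy
          rcases hz with rfl | rfl
          · exact ⟨i + 1, j, by omega, by ring⟩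
          · exact ⟨i, j + 1, by omega, by ring⟩

lemma sum_ideal_le {ι : Type*} (s : Finset ι) (A : ι → Ideal R2) (B : Ideal R2)
    (h : ∀ i ∈ s, A i ≤ B) : (∑ i ∈ s, A i) ≤ B := by
  classical
  induction s using Finset.induction_on with
  | empty => rw [Finset.sum_empty]; exact bot_le
  | insert a s' hnm ih =>
    next =>
      rw [Finset.sum_insert hnm, Ideal.add_eq_sup]
      exact sup_le (h a (Finset.mem_insert_self a s'))
        (ih fun i hi => h i (Finset.mem_insert_of_mem hi))

lemma le_sum_ideal {ι : Type*} (s : Finset ι) (A : ι → Ideal R2) {j : ι} (hj : j ∈ s) :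
    A j ≤ ∑ i ∈ s, A i := by
  classical
  rw [← Finset.add_sum_erase s A hj, Ideal.add_eq_sup]
  exact le_sup_left

/-- For `m = ⟨x,y⟩ ⊆ R = ℝ[x,y]`, pairwise non-proportional nonzero linear forms
`ℓ_1,…,ℓ_t` with `t ≥ 2`, and `s ≥ r + ⌊r/(t-1)⌋`:
`m^{s+1} = Σ_{j=1}^t (⟨ℓ_j^{r+1}⟩ ∩ m^{s+1})`. -/
theorem stmt4 (t : ℕ) (ht : 2 ≤ t) (ℓ : Fin t → R2)
    (hhom : ∀ j, ℓ j ∈ homogeneousSubmodule (Fin 2) ℝ 1)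
    (hne : ∀ j, ℓ j ≠ 0)
    (hprop : ∀ i j, i ≠ j → ∀ c : ℝ, ℓ i ≠ c • ℓ j)
    (r s : ℕ) (hs : r + r / (t - 1) ≤ s) :
    (Ideal.span {X 0, X 1} : Ideal R2) ^ (s + 1)
      = ∑ j : Fin t, (Ideal.span {ℓ j ^ (r + 1)} ⊓ (Ideal.span {X 0, X 1} : Ideal R2) ^ (s + 1)) := by
  classical
  have hL : ∀ j, (ℓ j).IsHomogeneous 1 := fun j => (mem_homogeneousSubmodule _ _).mp (hhom j)
  set A : Fin t → ℝ := fun j => coeff (eff 1 1) (ℓ j) with hA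
  set B : Fin t → ℝ := fun j => coeff (eff 1 0) (ℓ j) with hB
  have hLF : ∀ j, ℓ j = LF (A j) (B j) := fun j => linear_form (hL j)
  have hAB : ∀ j, ¬(A j = 0 ∧ B j = 0) := by
    rintro j ⟨h1, h2⟩
    apply hne j
    rw [hLF j, h1, h2, LF, C_0]
    ring
  have hdet : ∀ i j, i ≠ j → A i * B j - A j * B i ≠ 0 := by
    intro i j hij h0
    by_cases hBj : B j = 0
    · have hAj : A j ≠ 0 := fun h => hAB j ⟨h, hBj⟩
      rw [hBj, mul_zero, zero_sub, neg_eq_zero] at h0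
      have hBi : B i = 0 := (mul_eq_zero.mp h0).resolve_left hAj
      apply hprop i j hij (A i / A j)
      rw [hLF i, hLF j, smul_LF]
      have h1 : A i / A j * A j = A i := by field_simp
      have h2 : A i / A j * B j = B i := by rw [hBj, hBi, mul_zero]
      rw [h1, h2]
    · apply hprop i j hij (B i / B j)
      rw [hLF i, hLF j, smul_LF]
      have h1 : B i / B j * A j = A i := by
        field_simp
        linarith [sub_eq_zero.mp h0]
      have h2 : B i / B j * B j = B i := by field_simp
      rw [h1, h2]
  obtain ⟨c, hc⟩ : ∃ c : ℝ, ∀ j, A j * c + B j ≠ 0 := by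
    obtain ⟨c, hc⟩ := Infinite.exists_notMem_finset
      (Finset.image (fun j : Fin t => -(B j) / (A j)) Finset.univ)
    refine ⟨c, fun j h0 => ?_⟩
    by_cases hAj : A j = 0
    · rw [hAj, zero_mul, zero_add] at h0
      exact hAB j ⟨hAj, h0⟩
    · apply hc
      refine Finset.mem_image.mpr ⟨j, Finset.mem_univ j, ?_⟩
      rw [div_eq_iff hAj]
      linarith
  set B' : Fin t → ℝ := fun j => A j * c + B j with hB'
  have hc' : ∀ j, B' j ≠ 0 := hc
  have hdet' : ∀ i j, i ≠ j → A i * B' j - A j * B' i ≠ 0 := by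
    intro i j hij
    have he : A i * B' j - A j * B' i = A i * B j - A j * B i := by rw [hB']; ring
    rw [he]
    exact hdet i j hij
  have hdcount : (s + 1) + 1 ≤ t * ((s + 1) - r) := by
    have ht1 : 0 < t - 1 := by omega
    have hrs' : r ≤ s := by
      have : r ≤ r + r / (t - 1) := Nat.le_add_right _ _
      omega
    have hqm := Nat.div_add_mod r (t - 1)
    have hm : r % (t - 1) < t - 1 := Nat.mod_lt _ ht1
    have hu : r / (t - 1) + 1 ≤ (s + 1) - r := by omega
    have h1 : r + 1 ≤ (t - 1) * (r / (t - 1)) + (t - 1) := by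
      conv_lhs => rw [← hqm]
      rw [add_assoc]
      exact Nat.add_le_add_left (Nat.succ_le_of_lt hm) _
    have h2 : (t - 1) * (r / (t - 1) + 1) ≤ (t - 1) * ((s + 1) - r) :=
      Nat.mul_le_mul_left _ hu
    have h2' : (t - 1) * (r / (t - 1)) + (t - 1) ≤ (t - 1) * ((s + 1) - r) := by
      rw [← Nat.mul_succ]
      exact h2
    have h3 : r + 1 ≤ (t - 1) * ((s + 1) - r) := le_trans h1 h2'
    have h4 : t * ((s + 1) - r) = (t - 1) * ((s + 1) - r) + ((s + 1) - r) := by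
      calc t * ((s + 1) - r) = (t - 1 + 1) * ((s + 1) - r) := by
            rw [show t - 1 + 1 = t from by omega]
        _ = (t - 1) * ((s + 1) - r) + ((s + 1) - r) := by rw [Nat.succ_mul]
    calc s + 1 + 1 = (r + 1) + ((s + 1) - r) := by omega
      _ ≤ (t - 1) * ((s + 1) - r) + ((s + 1) - r) := Nat.add_le_add_right h3 _
      _ = t * ((s + 1) - r) := h4.symm
  have hrs : r ≤ s := le_trans (Nat.le_add_right _ _) hs
  have hmono : ∀ i j : ℕ, i + j = s + 1 → (X 0 ^ i * X 1 ^ j : R2)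
      ∈ ∑ j' : Fin t,
        (Ideal.span {ℓ j' ^ (r + 1)} ⊓ (Ideal.span {X 0, X 1} : Ideal R2) ^ (s + 1)) := by
    intro α β hαβ
    have hTmem : ∀ (j : Fin t) (Q : R2), Q.IsHomogeneous ((s + 1) - (r + 1)) →
        ℓ j ^ (r + 1) * Q
          ∈ ∑ j' : Fin t,
            (Ideal.span {ℓ j' ^ (r + 1)} ⊓ (Ideal.span {X 0, X 1} : Ideal R2) ^ (s + 1)) := by
      intro j Q hQ
      refine le_sum_ideal Finset.univ _ (Finset.mem_univ j) ?_
      refine Submodule.mem_inf.mpr ⟨?_, ?_⟩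
      · exact Ideal.mem_span_singleton.mpr (dvd_mul_right _ _)
      · have hmul : (ℓ j ^ (r + 1) * Q).IsHomogeneous (s + 1) := by
          have h1 := ((hL j).pow (r + 1)).mul hQ
          rw [show 1 * (r + 1) + ((s + 1) - (r + 1)) = s + 1 from by omega] at h1
          exact h1
        exact homog_mem_mpow hmul
    have hcore : ∀ α' β' : ℕ, α' + β' = s + 1 →
        (X 0 ^ α' * X 1 ^ β' : R2) ∈ Submodule.span ℝ
          {P : R2 | ∃ (j : Fin t) (k : ℕ), k ≤ (s + 1) - (r + 1) ∧
            P = LF (A j) (B' j) ^ (r + 1) * (X 0 ^ k * X 1 ^ ((s + 1) - (r + 1) - k))} :=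
      fun α' β' h => core_span t (s + 1) r A B' hc' hdet' hdcount α' β' h
    have hshom : (sh c (X 0 ^ α * X 1 ^ β : R2)).IsHomogeneous (s + 1) := by
      apply sh_homog
      have h1 := ((isHomogeneous_X ℝ (0 : Fin 2)).pow α).mul
        ((isHomogeneous_X ℝ (1 : Fin 2)).pow β)
      rw [show 1 * α + 1 * β = s + 1 from by omega] at h1
      exact h1
    have hin : sh c (X 0 ^ α * X 1 ^ β : R2) ∈ Submodule.span ℝ
        {P : R2 | ∃ (j : Fin t) (k : ℕ), k ≤ (s + 1) - (r + 1) ∧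
          P = LF (A j) (B' j) ^ (r + 1) * (X 0 ^ k * X 1 ^ ((s + 1) - (r + 1) - k))} := by
      rw [homog_expand hshom, mk]
      apply Submodule.sum_mem
      intro i hi
      have hid : i ≤ s + 1 := by have := Finset.mem_range.mp hi; omega
      rw [monomial_eff]
      rw [show (C (coeff (eff (s + 1) i) (sh c (X 0 ^ α * X 1 ^ β : R2)))
            * X 0 ^ i * X 1 ^ (s + 1 - i) : R2)
          = (coeff (eff (s + 1) i) (sh c (X 0 ^ α * X 1 ^ β : R2)))
            • (X 0 ^ i * X 1 ^ (s + 1 - i)) from by rw [smul_eq_C_mul]; ring]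
      exact Submodule.smul_mem _ _ (hcore i (s + 1 - i) (by omega))
    have him : (X 0 ^ α * X 1 ^ β : R2) ∈ Submodule.span ℝ
        ((sh (-c)) '' {P : R2 | ∃ (j : Fin t) (k : ℕ), k ≤ (s + 1) - (r + 1) ∧
          P = LF (A j) (B' j) ^ (r + 1) * (X 0 ^ k * X 1 ^ ((s + 1) - (r + 1) - k))}) := by
      have h1 := Submodule.mem_map_of_mem (f := (sh (-c)).toLinearMap) hin
      rw [Submodule.map_span] at h1
      rw [show (sh (-c)).toLinearMap (sh c (X 0 ^ α * X 1 ^ β : R2))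
          = (X 0 ^ α * X 1 ^ β : R2) from sh_sh c _] at h1
      exact h1
    refine Submodule.span_induction
      (p := fun x _ => x ∈ ∑ j' : Fin t,
        (Ideal.span {ℓ j' ^ (r + 1)} ⊓ (Ideal.span {X 0, X 1} : Ideal R2) ^ (s + 1)))
      ?_ ?_ ?_ ?_ him
    · rintro x ⟨y, ⟨j, k, hk, rfl⟩, rfl⟩
      have himg : sh (-c)
            (LF (A j) (B' j) ^ (r + 1) * (X 0 ^ k * X 1 ^ ((s + 1) - (r + 1) - k)))
          = ℓ j ^ (r + 1) * (sh (-c) (X 0 ^ k * X 1 ^ ((s + 1) - (r + 1) - k))) := by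
        rw [map_mul, map_pow]
        have h2 : LF (A j) (B' j) = sh c (ℓ j) := by
          rw [hLF j, sh_LF]
        rw [h2, sh_sh]
      rw [himg]
      apply hTmem j
      apply sh_homog
      have h1 := ((isHomogeneous_X ℝ (0 : Fin 2)).pow k).mul
        ((isHomogeneous_X ℝ (1 : Fin 2)).pow ((s + 1) - (r + 1) - k))
      rw [show 1 * k + 1 * ((s + 1) - (r + 1) - k) = (s + 1) - (r + 1) from by omega] at h1
      exact h1
    · exact Submodule.zero_mem _
    · intro x y _ _ hx hy
      exact Submodule.add_mem _ hx hy
    · intro a x _ hx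
      rw [smul_eq_C_mul]
      exact Ideal.mul_mem_left _ _ hx
  apply le_antisymm
  · calc (Ideal.span {X 0, X 1} : Ideal R2) ^ (s + 1)
        ≤ Ideal.span {P : R2 | ∃ i j : ℕ, i + j = s + 1 ∧ P = X 0 ^ i * X 1 ^ j} := mpow_le _
      _ ≤ ∑ j' : Fin t,
          (Ideal.span {ℓ j' ^ (r + 1)} ⊓ (Ideal.span {X 0, X 1} : Ideal R2) ^ (s + 1)) := by
          rw [Ideal.span_le]
          rintro x ⟨i, j, hij, rfl⟩
          exact hmono i j hij
  · apply sum_ideal_le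
    intro j _
    exact inf_le_right
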